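/- Let d = 2, A = [[1,1,0],[0,1,1],[0,1,1]] and B = [[1,0,0],[0,1,1],[0,1,1]]. Then A > B entrywise (A ≥ B everywhere with strict inequality at the (1,2) entry), B is reducible, and nevertheless h(T_A) = h(T_B) = log 2; in particular, strict monotonicity of the entropy of hom Markov tree-shifts fails for reducible matrices. -/

import Mathlib

open Filter Real

/-- `treeP d M n i` = number of `n`-blocks of the hom Markov tree-shift `T_M`
on the `d`-tree whose root label is `i`. -/
def treeP (d : ℕ) {ι : Type} [Fintype ι] (M : Matrix ι ι ℕ) : ℕ → ι → ℕ
  | 0, _ => 1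
  | n + 1, i => (∑ j, M i j * treeP d M n j) ^ d

/-- `|Δ_n| = 1 + d + ⋯ + d^n`. -/
def deltaCard (d n : ℕ) : ℕ := ∑ i ∈ Finset.range (n + 1), d ^ i

/-- Topological entropy of the hom Markov tree-shift `T_M` on the `d`-tree. -/
noncomputable def treeEntropy (d : ℕ) {ι : Type} [Fintype ι] (M : Matrix ι ι ℕ) : ℝ :=
  Filter.limsup (fun n => Real.log (∑ i, treeP d M n i) / (deltaCard d n : ℝ)) Filter.atTop

/-- `M` has entries in `{0,1}`. -/
def IsBinary {ι : Type} [Fintype ι] (M : Matrix ι ι ℕ) : Prop := ∀ i j, M i j ≤ 1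

/-- `M` is irreducible. -/
def MatIrreducible {ι : Type} [Fintype ι] [DecidableEq ι] (M : Matrix ι ι ℕ) : Prop :=
  ∀ i j, ∃ n, 1 ≤ n ∧ 0 < (M ^ n) i j

/-- `M` is the block matrix `[[E_a, R],[O, E_b]]` with `R` binary of constant row sum `l`. -/
def IsMabl (a b l : ℕ) (M : Matrix (Fin (a + b)) (Fin (a + b)) ℕ) : Prop :=
  (∀ i j, M i j ≤ 1) ∧
  (∀ i j : Fin (a + b), (i : ℕ) < a → (j : ℕ) < a → M i j = 1) ∧
  (∀ i j : Fin (a + b), a ≤ (i : ℕ) → a ≤ (j : ℕ) → M i j = 1) ∧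
  (∀ i j : Fin (a + b), a ≤ (i : ℕ) → (j : ℕ) < a → M i j = 0) ∧
  (∀ i : Fin (a + b), (i : ℕ) < a → (∑ j : Fin (a + b), if a ≤ (j : ℕ) then M i j else 0) = l)

/-!
Labels `1` and `2` form a closed class on which both matrices act as the full shift on two
symbols, so the blocks rooted there number `2 ^ (|Δ_n| - 1)`; as every row of `A` and of `B` has at
most two ones, no root admits more. Hence `p(n)` is `2 ^ |Δ_n|` up to a bounded factor for both
matrices, and both entropies are `log 2`. `B` is reducible because `0` can only be followed by `0`.
-/

open Topology

def IsClosedClass {ι α : Type*} [Zero α] (M : Matrix ι ι α) (S : Finset ι) : Prop :=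
  ∀ i ∈ S, ∀ j ∉ S, M i j = 0

theorem IsClosedClass.pow_apply_eq_zero {ι α : Type*} [Fintype ι] [DecidableEq ι] [Semiring α]
    {M : Matrix ι ι α} {S : Finset ι} (hS : IsClosedClass M S) (n : ℕ) {i j : ι}
    (hi : i ∈ S) (hj : j ∉ S) : (M ^ n) i j = 0 := by
  induction n generalizing j with
  | zero => rw [pow_zero, Matrix.one_apply_ne (ne_of_mem_of_not_mem hi hj)]
  | succ n ih =>
    rw [pow_succ, Matrix.mul_apply]
    refine Finset.sum_eq_zero fun l _ => ?_
    by_cases hl : l ∈ S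
    · rw [hS l hl j hj, mul_zero]
    · rw [ih hl, zero_mul]

theorem IsClosedClass.not_matIrreducible {ι : Type} [Fintype ι] [DecidableEq ι]
    {M : Matrix ι ι ℕ} {S : Finset ι} (hS : IsClosedClass M S) {i j : ι}
    (hi : i ∈ S) (hj : j ∉ S) : ¬ MatIrreducible M := by
  intro hM
  obtain ⟨n, -, hpos⟩ := hM i j
  rw [hS.pow_apply_eq_zero n hi hj] at hpos
  exact lt_irrefl 0 hpos

theorem deltaCard_succ (d n : ℕ) : deltaCard d (n + 1) = d * deltaCard d n + 1 := by
  simp only [deltaCard, Finset.sum_range_succ' _ (n + 1), Finset.mul_sum, pow_succ', pow_zero]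

theorem one_le_deltaCard (d n : ℕ) : 1 ≤ deltaCard d n := by
  cases n with
  | zero => simp [deltaCard]
  | succ n => rw [deltaCard_succ]; omega

theorem le_deltaCard {d : ℕ} (hd : 0 < d) (n : ℕ) : n + 1 ≤ deltaCard d n := by
  induction n with
  | zero => exact one_le_deltaCard d 0
  | succ n ih =>
    rw [deltaCard_succ]
    have := Nat.le_mul_of_pos_left (deltaCard d n) hd
    omega

theorem tendsto_deltaCard {d : ℕ} (hd : 0 < d) :
    Tendsto (fun n => (deltaCard d n : ℝ)) atTop atTop :=
  tendsto_natCast_atTop_atTop.comp <|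
    tendsto_atTop_mono (le_deltaCard hd) (tendsto_add_atTop_nat 1)

theorem pow_deltaCard (k d n : ℕ) : k ^ deltaCard d n = k * k ^ (deltaCard d n - 1) := by
  rw [← pow_succ', Nat.sub_add_cancel (one_le_deltaCard d n)]

theorem treeP_le_pow_of_rowSum_le {d : ℕ} {ι : Type} [Fintype ι] {M : Matrix ι ι ℕ}
    {k : ℕ} (hrow : ∀ i, ∑ j, M i j ≤ k) (n : ℕ) (i : ι) :
    treeP d M n i ≤ k ^ (deltaCard d n - 1) := by
  induction n generalizing i with
  | zero => simp [treeP, deltaCard]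
  | succ n ih =>
    have hsum : ∑ j, M i j * treeP d M n j ≤ k ^ deltaCard d n := calc
      ∑ j, M i j * treeP d M n j ≤ ∑ j, M i j * k ^ (deltaCard d n - 1) :=
        Finset.sum_le_sum fun j _ => Nat.mul_le_mul_left _ (ih j)
      _ = (∑ j, M i j) * k ^ (deltaCard d n - 1) := (Finset.sum_mul ..).symm
      _ ≤ k * k ^ (deltaCard d n - 1) := Nat.mul_le_mul_right _ (hrow i)
      _ = k ^ deltaCard d n := (pow_deltaCard ..).symm
    rw [treeP, deltaCard_succ, Nat.add_sub_cancel, pow_mul']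
    exact Nat.pow_le_pow_left hsum d

theorem treeP_eq_pow_of_isClosedClass {d : ℕ} {ι : Type} [Fintype ι] {M : Matrix ι ι ℕ}
    {S : Finset ι} {k : ℕ} (hS : IsClosedClass M S) (hrow : ∀ i ∈ S, ∑ j ∈ S, M i j = k)
    (n : ℕ) : ∀ i ∈ S, treeP d M n i = k ^ (deltaCard d n - 1) := by
  induction n with
  | zero => intro i _; simp [treeP, deltaCard]
  | succ n ih =>
    intro i hi
    have hsum : ∑ j, M i j * treeP d M n j = k ^ deltaCard d n := calc
      ∑ j, M i j * treeP d M n j = ∑ j ∈ S, M i j * treeP d M n j :=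
        (Finset.sum_subset (Finset.subset_univ S) fun j _ hj => by
          rw [hS i hi j hj, zero_mul]).symm
      _ = ∑ j ∈ S, M i j * k ^ (deltaCard d n - 1) :=
        Finset.sum_congr rfl fun j hj => by rw [ih j hj]
      _ = k ^ deltaCard d n := by rw [← Finset.sum_mul, hrow i hi, pow_deltaCard]
    rw [treeP, hsum, deltaCard_succ, Nat.add_sub_cancel, pow_mul']

theorem tendsto_div_of_abs_sub_mul_le {f D : ℕ → ℝ} {a C : ℝ} (hD : Tendsto D atTop atTop)
    (hf : ∀ n, |f n - a * D n| ≤ C) : Tendsto (fun n => f n / D n) atTop (𝓝 a) := by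
  have herr : Tendsto (fun n => (f n - a * D n) / D n) atTop (𝓝 0) := by
    refine squeeze_zero_norm' ?_ ((tendsto_const_nhds (x := C)).div_atTop hD)
    filter_upwards [hD.eventually_gt_atTop 0] with n hn
    rw [norm_div, Real.norm_eq_abs, Real.norm_of_nonneg hn.le]
    exact div_le_div_of_nonneg_right (hf n) hn.le
  refine (add_zero a ▸ herr.const_add a).congr' ?_
  filter_upwards [hD.eventually_gt_atTop 0] with n hn
  field_simp
  ring

theorem treeEntropy_eq_log_of_le_of_le {d : ℕ} (hd : 0 < d) {ι : Type} [Fintype ι]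
    {M : Matrix ι ι ℕ} {c C k : ℕ} (hk : 0 < k)
    (hlo : ∀ n, k ^ deltaCard d n ≤ c * ∑ i, treeP d M n i)
    (hhi : ∀ n, ∑ i, treeP d M n i ≤ C * k ^ deltaCard d n) :
    treeEntropy d M = log k := by
  refine Tendsto.limsup_eq <| tendsto_div_of_abs_sub_mul_le (C := max |log c| |log C|)
    (tendsto_deltaCard hd) fun n => ?_
  rw [← Nat.cast_sum]
  set s := ∑ i, treeP d M n i
  have hcs : 0 < c * s := (by positivity : 0 < k ^ deltaCard d n).trans_le (hlo n)
  have hc : 0 < c := Nat.pos_of_mul_pos_right hcs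
  have hs : 0 < s := Nat.pos_of_mul_pos_left hcs
  have hC : 0 < C := Nat.pos_of_mul_pos_right (hs.trans_le (hhi n))
  have hlower : log k * deltaCard d n ≤ log c + log s := by
    have := log_le_log (by positivity) (Nat.cast_le (α := ℝ).mpr (hlo n))
    rwa [Nat.cast_pow, Nat.cast_mul, log_pow, log_mul (by positivity) (by positivity),
      mul_comm] at this
  have hupper : log s ≤ log C + log k * deltaCard d n := by
    have := log_le_log (by exact_mod_cast hs) (Nat.cast_le (α := ℝ).mpr (hhi n))
    rwa [Nat.cast_mul, Nat.cast_pow, log_mul (by positivity) (by positivity), log_pow,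
      mul_comm] at this
  rw [abs_le]
  constructor <;>
    linarith [le_abs_self (log c), le_abs_self (log C), le_max_left |log c| |log C|,
      le_max_right |log c| |log C|]

theorem treeEntropy_eq_log_of_isClosedClass {d : ℕ} (hd : 0 < d) {ι : Type} [Fintype ι]
    {M : Matrix ι ι ℕ} {S : Finset ι} {k : ℕ} (hk : 0 < k) (hS : IsClosedClass M S)
    (hSne : S.Nonempty) (hrowS : ∀ i ∈ S, ∑ j ∈ S, M i j = k)
    (hrow : ∀ i, ∑ j, M i j ≤ k) :
    treeEntropy d M = log k := by
  obtain ⟨i₀, hi₀⟩ := hSne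
  refine treeEntropy_eq_log_of_le_of_le hd (c := k) (C := Fintype.card ι) hk
    (fun n => ?_) (fun n => ?_)
  · calc k ^ deltaCard d n = k * treeP d M n i₀ := by
          rw [treeP_eq_pow_of_isClosedClass hS hrowS n i₀ hi₀, pow_deltaCard]
      _ ≤ k * ∑ i, treeP d M n i :=
          Nat.mul_le_mul_left _ (Finset.single_le_sum (by simp) (Finset.mem_univ i₀))
  · calc ∑ i, treeP d M n i ≤ ∑ _i : ι, k ^ (deltaCard d n - 1) :=
          Finset.sum_le_sum fun i _ => treeP_le_pow_of_rowSum_le hrow n i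
      _ = Fintype.card ι * k ^ (deltaCard d n - 1) := by simp
      _ ≤ Fintype.card ι * k ^ deltaCard d n :=
          Nat.mul_le_mul_left _ (Nat.pow_le_pow_right hk (Nat.sub_le _ _))

/-- **Remark 2.3.** For `d = 2`, `A = [[1,1,0],[0,1,1],[0,1,1]]` and
`B = [[1,0,0],[0,1,1],[0,1,1]]`: `A > B` entrywise, `B` is reducible, yet
`h(T_A) = h(T_B) = log 2`; strict monotonicity fails for reducible matrices. -/
theorem treeEntropy_reducible_monotonicity_fails :
    (∀ i j, (!![1, 0, 0; 0, 1, 1; 0, 1, 1] : Matrix (Fin 3) (Fin 3) ℕ) i j ≤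
      (!![1, 1, 0; 0, 1, 1; 0, 1, 1] : Matrix (Fin 3) (Fin 3) ℕ) i j) ∧
    (!![1, 0, 0; 0, 1, 1; 0, 1, 1] : Matrix (Fin 3) (Fin 3) ℕ) 0 1 <
      (!![1, 1, 0; 0, 1, 1; 0, 1, 1] : Matrix (Fin 3) (Fin 3) ℕ) 0 1 ∧
    ¬ MatIrreducible (!![1, 0, 0; 0, 1, 1; 0, 1, 1] : Matrix (Fin 3) (Fin 3) ℕ) ∧
    treeEntropy 2 (!![1, 1, 0; 0, 1, 1; 0, 1, 1] : Matrix (Fin 3) (Fin 3) ℕ) = Real.log 2 ∧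
    treeEntropy 2 (!![1, 0, 0; 0, 1, 1; 0, 1, 1] : Matrix (Fin 3) (Fin 3) ℕ) = Real.log 2 := by
  have hB : IsClosedClass (!![1, 0, 0; 0, 1, 1; 0, 1, 1] : Matrix (Fin 3) (Fin 3) ℕ) {0} := by
    simp [IsClosedClass, Fin.forall_fin_succ]
  refine ⟨by simp [Fin.forall_fin_succ], by simp,
    hB.not_matIrreducible (Finset.mem_singleton_self 0) (j := 1) (by simp), ?_, ?_⟩ <;>
  · refine treeEntropy_eq_log_of_isClosedClass (S := {1, 2}) (k := 2) two_pos two_pos ?_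
      ⟨1, by simp⟩ ?_ ?_ <;>
    simp [IsClosedClass, Fin.forall_fin_succ, Fin.sum_univ_succ]
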